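/- Let G = K(H,T) be a kite graph with head H, root v, and tail formed by s ≥ 2 paths of length r with vertices v_{i1}, …, v_{ir} (i = 1, …, s), and let G⁺ be a graph obtained from G by adding some edges among the vertices of each set U_j = {v_{2j}, v_{3j}, …, v_{sj}}, for each j ∈ {1, …, r}. Then every distinct eigenvalue of L(G) is also an eigenvalue of L(G⁺) (not necessarily with the same multiplicity); in particular, α(G⁺) = α(G). -/

import Mathlib

open Matrix

attribute [local instance] Classical.propDecidable

/-- The Laplacian matrix `L(G) = D(G) - A(G)` of a simple graph, over `ℝ`. -/
noncomputable def lapMat {V : Type*} [Fintype V] (G : SimpleGraph V) : Matrix V V ℝ :=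
  fun u w =>
    (if u = w then ∑ x : V, (if G.Adj u x then (1 : ℝ) else 0) else 0)
      - (if G.Adj u w then (1 : ℝ) else 0)

/-- The smallest eigenvalue of a symmetric real matrix, as the infimum of Rayleigh quotients. -/
noncomputable def lambdaMin {m : Type*} [Fintype m] (M : Matrix m m ℝ) : ℝ :=
  sInf {t : ℝ | ∃ x : m → ℝ, x ≠ 0 ∧ (x ⬝ᵥ (M *ᵥ x)) / (x ⬝ᵥ x) = t}

/-- The algebraic connectivity `α(G)`: the second smallest Laplacian eigenvalue, characterized
as the minimum Rayleigh quotient over nonzero vectors orthogonal to the all-ones vector. -/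
noncomputable def algConn {V : Type*} [Fintype V] (G : SimpleGraph V) : ℝ :=
  sInf {t : ℝ | ∃ x : V → ℝ, x ≠ 0 ∧ (∑ v, x v) = 0 ∧
    (x ⬝ᵥ ((lapMat G) *ᵥ x)) / (x ⬝ᵥ x) = t}

/-- A Fiedler vector: an eigenvector of `L(G)` for the eigenvalue `α(G)`. -/
noncomputable def IsFiedlerVector {V : Type*} [Fintype V] (G : SimpleGraph V) (x : V → ℝ) : Prop :=
  x ≠ 0 ∧ (lapMat G) *ᵥ x = algConn G • x

/-- The `k`-token graph of `G`: vertices are the `k`-subsets of the vertex set, two subsets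
being adjacent iff their symmetric difference is a pair `{u, v}` with `uv` an edge of `G`. -/
def tokenGraph {V : Type*} [DecidableEq V] (G : SimpleGraph V) (k : ℕ) :
    SimpleGraph {A : Finset V // A.card = k} where
  Adj A B := ∃ u v : V, G.Adj u v ∧ symmDiff A.val B.val = {u, v}
  symm := by
    constructor
    rintro A B ⟨u, v, h, hs⟩
    exact ⟨u, v, h, by rwa [symmDiff_comm]⟩
  loopless := by
    constructor
    rintro A ⟨u, v, h, hs⟩
    rw [symmDiff_self] at hs
    have : u ∈ (⊥ : Finset V) := hs ▸ Finset.mem_insert_self u {v}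
    simp at this

/-- Adding the edge `uv` to `G`. -/
def addEdge {V : Type*} (G : SimpleGraph V) (u v : V) : SimpleGraph V :=
  G ⊔ SimpleGraph.fromEdgeSet {s(u, v)}

/-- Degree of a vertex. -/
noncomputable def deg {V : Type*} [Fintype V] (G : SimpleGraph V) (u : V) : ℕ :=
  (Finset.univ.filter (fun w => G.Adj u w)).card

/-- The smallest eigenvalue of the principal submatrix of `M` with rows and columns in `S`. -/
noncomputable def principalMin {V : Type*} [Fintype V] (M : Matrix V V ℝ) (S : Finset V) : ℝ :=
  lambdaMin (M.submatrix (fun a : {x // x ∈ S} => (a : V)) (fun a : {x // x ∈ S} => (a : V)))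

/-- The cycle on `Fin n` (for `n ≥ 3`), `i` adjacent to `i ± 1 (mod n)`. -/
def cyc (n : ℕ) : SimpleGraph (Fin n) :=
  SimpleGraph.fromRel (fun i j => (i.val + 1) % n = j.val)

/-- The kite graph `K(H,T)` with head `H`, root `v`, and tail formed by `s` paths of length `r`:
`Sum.inr (i, j)` is the vertex `v_{(i+1)(j+1)}`, the `(j+1)`-st vertex of the `(i+1)`-st path
(so the first path corresponds to `i = 0` and the path vertices adjacent to `v` have `j = 0`). -/
def kite {W : Type*} (H : SimpleGraph W) (v : W) (s r : ℕ) :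
    SimpleGraph (W ⊕ Fin s × Fin r) :=
  SimpleGraph.fromRel (fun a b =>
    match a, b with
    | Sum.inl x, Sum.inl y => H.Adj x y
    | Sum.inl x, Sum.inr (_, j) => x = v ∧ j.val = 0
    | Sum.inr (i, j), Sum.inr (i', j') => i = i' ∧ j.val + 1 = j'.val
    | _, _ => False)

/-!
Permuting the tail paths is an automorphism of the kite, so `L(G)` commutes with it; and on
vectors vanishing on the head the quadratic form of `L(G)` is the sum of its values on the single
paths, which all behave alike. Edges added inside the sets `U_j` do not change `L y` for vectors
`y` constant on every `U_j`, so both claims reduce to producing such vectors.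

If an eigenvector `x` is not constant on the layers, there is a path `b ≠ 0` with
`x ∘ (0 b) ≠ x`; then `x - x ∘ (0 b)` is an eigenvector carrying a profile `g` on path `0` and
`-g` on path `b`, and the sum of its images under the swaps `(b k)`, `k ≠ 0`, is an eigenvector
carrying `(s - 1) g` on path `0` and `-g` on every other path.

For `α`, a vector `x ⊥ 1` splits, orthogonally for both `⟨·, ·⟩` and `⟨·, L ·⟩`, into its layer
average `p` and a part `z` vanishing on the head. The Rayleigh quotient of `x` is at least that of
`p` or that of `z`; the quotient of `z` is at least that of its best path profile `g`, which is
also the quotient of the vector carrying `(s - 1) g, -g, …, -g`, a vector orthogonal to `1` and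
constant on every `U_j`. The reverse inequality `α(G) ≤ α(G⁺)` is monotonicity of the quadratic
form.
-/

section Laplacian

variable {V : Type*} [Fintype V]

theorem lapMat_eq_lapMatrix (G : SimpleGraph V) : lapMat G = G.lapMatrix ℝ := by
  ext u w
  simp [lapMat, SimpleGraph.lapMatrix, SimpleGraph.degMatrix, Matrix.diagonal_apply,
    SimpleGraph.adjMatrix_apply, SimpleGraph.degree_eq_sum_if_adj]

theorem lapMat_mulVec_apply (G : SimpleGraph V) (x : V → ℝ) (u : V) :
    (lapMat G *ᵥ x) u = ∑ w, if G.Adj u w then x u - x w else 0 := by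
  rw [lapMat_eq_lapMatrix, SimpleGraph.lapMatrix_mulVec_apply, ← Finset.sum_filter,
    Finset.sum_sub_distrib, Finset.sum_const, nsmul_eq_mul, ← SimpleGraph.neighborFinset_eq_filter,
    SimpleGraph.card_neighborFinset_eq_degree]

theorem dotProduct_lapMat_mulVec_comm (G : SimpleGraph V) (x y : V → ℝ) :
    x ⬝ᵥ (lapMat G *ᵥ y) = (lapMat G *ᵥ x) ⬝ᵥ y := by
  rw [dotProduct_mulVec, ← mulVec_transpose, lapMat_eq_lapMatrix, (G.isSymm_lapMatrix ℝ).eq,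
    dotProduct_comm]

theorem dotProduct_lapMat_mulVec_self (G : SimpleGraph V) (x : V → ℝ) :
    x ⬝ᵥ (lapMat G *ᵥ x) = (∑ u, ∑ w, if G.Adj u w then (x u - x w) ^ 2 else 0) / 2 := by
  rw [lapMat_eq_lapMatrix, ← toLinearMap₂'_apply', SimpleGraph.lapMatrix_toLinearMap₂']

theorem dotProduct_lapMat_mulVec_self_nonneg (G : SimpleGraph V) (x : V → ℝ) :
    0 ≤ x ⬝ᵥ (lapMat G *ᵥ x) := by
  rw [dotProduct_lapMat_mulVec_self]
  exact div_nonneg (Finset.sum_nonneg fun u _ => Finset.sum_nonneg fun w _ => by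
    split_ifs <;> positivity) zero_le_two

theorem dotProduct_lapMat_mulVec_self_mono {G G' : SimpleGraph V} (h : G ≤ G') (x : V → ℝ) :
    x ⬝ᵥ (lapMat G *ᵥ x) ≤ x ⬝ᵥ (lapMat G' *ᵥ x) := by
  simp only [dotProduct_lapMat_mulVec_self]
  gcongr with u _ w _
  by_cases hG : G.Adj u w
  · simp [hG, h hG]
  · simp only [hG, if_false]
    split_ifs <;> positivity

theorem lapMat_mulVec_eq_of_le {G G' : SimpleGraph V} (h : G ≤ G') {x : V → ℝ}
    (hx : ∀ a b, G'.Adj a b → ¬G.Adj a b → x a = x b) : lapMat G' *ᵥ x = lapMat G *ᵥ x := by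
  ext u
  simp only [lapMat_mulVec_apply]
  refine Finset.sum_congr rfl fun w _ => ?_
  by_cases hG : G.Adj u w
  · simp [hG, h hG]
  · by_cases hG' : G'.Adj u w
    · simp [hG, hG', hx u w hG' hG]
    · simp [hG, hG']

theorem dotProduct_lapMat_mulVec_eq_zero (G : SimpleGraph V) {x y : V → ℝ}
    (h : ∀ a b, x a ≠ 0 → y b ≠ 0 → a ≠ b ∧ ¬G.Adj a b) : x ⬝ᵥ (lapMat G *ᵥ y) = 0 := by
  refine Finset.sum_eq_zero fun a _ => ?_
  rw [lapMat_mulVec_apply, Finset.mul_sum]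
  refine Finset.sum_eq_zero fun b _ => ?_
  by_cases hxa : x a = 0
  · simp [hxa]
  have hya : y a = 0 := by_contra fun hya => (h a a hxa hya).1 rfl
  split_ifs with hab
  · have hyb : y b = 0 := by_contra fun hyb => (h a b hxa hyb).2 hab
    simp [hya, hyb]
  · simp

theorem lapMat_mulVec_comp_iso {V' : Type*} [Fintype V'] {G : SimpleGraph V}
    {G' : SimpleGraph V'} (f : G ≃g G') (x : V' → ℝ) :
    lapMat G *ᵥ (x ∘ f) = (lapMat G' *ᵥ x) ∘ f := by
  ext u
  simp only [lapMat_mulVec_apply, Function.comp_apply]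
  rw [← f.toEquiv.sum_comp]
  simp [f.map_adj_iff]

theorem dotProduct_lapMat_mulVec_comp_iso {V' : Type*} [Fintype V'] {G : SimpleGraph V}
    {G' : SimpleGraph V'} (f : G ≃g G') (x : V' → ℝ) :
    (x ∘ f) ⬝ᵥ (lapMat G *ᵥ (x ∘ f)) = x ⬝ᵥ (lapMat G' *ᵥ x) := by
  rw [lapMat_mulVec_comp_iso]
  exact f.toEquiv.sum_comp fun u => x u * (lapMat G' *ᵥ x) u

theorem comp_mem_eigenspace_lapMat {G : SimpleGraph V} (f : G ≃g G)
    {μ : ℝ} {x : V → ℝ} (hx : x ∈ Module.End.eigenspace (toLin' (lapMat G)) μ) :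
    x ∘ f ∈ Module.End.eigenspace (toLin' (lapMat G)) μ := by
  rw [Module.End.mem_eigenspace_iff, toLin'_apply] at hx ⊢
  rw [lapMat_mulVec_comp_iso, hx]
  rfl

end Laplacian

theorem dotProduct_mulVec_sum_self {V ι : Type*} [Fintype V] (M : Matrix V V ℝ) (t : Finset ι)
    (u : ι → V → ℝ) (h : ∀ i ∈ t, ∀ k ∈ t, i ≠ k → u i ⬝ᵥ (M *ᵥ u k) = 0) :
    (∑ i ∈ t, u i) ⬝ᵥ (M *ᵥ ∑ i ∈ t, u i) = ∑ i ∈ t, u i ⬝ᵥ (M *ᵥ u i) := by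
  simp only [mulVec_sum, sum_dotProduct, dotProduct_sum]
  exact Finset.sum_congr rfl fun i hi =>
    Finset.sum_eq_single_of_mem i hi fun k hk hki => h k hk i hi hki

theorem dotProduct_self_pos {V : Type*} [Fintype V] {x : V → ℝ} (hx : x ≠ 0) : 0 < x ⬝ᵥ x := by
  simpa using dotProduct_self_star_pos_iff.mpr hx

noncomputable def rayleigh {V : Type*} [Fintype V] (M : Matrix V V ℝ) (x : V → ℝ) : ℝ :=
  x ⬝ᵥ (M *ᵥ x) / (x ⬝ᵥ x)

theorem algConn_le_of_forall_exists {V : Type*} [Fintype V] {G G' : SimpleGraph V}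
    (h : ∀ x : V → ℝ, x ≠ 0 → ∑ u, x u = 0 →
      ∃ y : V → ℝ, y ≠ 0 ∧ ∑ u, y u = 0 ∧ rayleigh (lapMat G) y ≤ rayleigh (lapMat G') x) :
    algConn G ≤ algConn G' := by
  by_cases hne : ∃ x : V → ℝ, x ≠ 0 ∧ ∑ u, x u = 0
  · obtain ⟨x₀, hx₀, hs₀⟩ := hne
    refine le_csInf ⟨_, x₀, hx₀, hs₀, rfl⟩ ?_
    rintro t ⟨x, hx, hsx, rfl⟩
    obtain ⟨y, hy, hsy, hle⟩ := h x hx hsx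
    have hbdd : BddBelow {t : ℝ | ∃ x : V → ℝ, x ≠ 0 ∧ (∑ v, x v) = 0 ∧
        (x ⬝ᵥ ((lapMat G) *ᵥ x)) / (x ⬝ᵥ x) = t} := ⟨0, by
      rintro t ⟨x, hx, -, rfl⟩
      exact div_nonneg (dotProduct_lapMat_mulVec_self_nonneg G x) (dotProduct_self_pos hx).le⟩
    exact (csInf_le hbdd ⟨y, hy, hsy, rfl⟩).trans hle
  · have hzero : ∀ K : SimpleGraph V, algConn K = 0 := fun K =>
      (congrArg sInf (Set.eq_empty_of_forall_notMem (by
        rintro _ ⟨x, hx, hsx, -⟩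
        exact hne ⟨x, hx, hsx⟩))).trans Real.sInf_empty
    rw [hzero, hzero]

theorem min_div_le_add_div_add (a c : ℝ) {b d : ℝ} (hb : 0 < b) (hd : 0 < d) :
    min (a / b) (c / d) ≤ (a + c) / (b + d) := by
  by_contra! h
  rw [lt_min_iff, div_lt_div_iff₀ (by positivity) hb, div_lt_div_iff₀ (by positivity) hd] at h
  nlinarith [h.1, h.2]

theorem Finset.exists_pos_div_le_sum_div {ι : Type*} {t : Finset ι} {a b : ι → ℝ}
    (ha : ∀ i ∈ t, 0 ≤ a i) (hb : ∀ i ∈ t, 0 ≤ b i) (h : 0 < ∑ i ∈ t, b i) :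
    ∃ i ∈ t, 0 < b i ∧ a i / b i ≤ (∑ i ∈ t, a i) / ∑ i ∈ t, b i := by
  set A := ∑ i ∈ t, a i
  set B := ∑ i ∈ t, b i
  have hB : ∑ i ∈ t with 0 < b i, b i = B :=
    Finset.sum_filter_of_ne fun i hi hne => (hb i hi).lt_of_ne hne.symm
  have hA : ∑ i ∈ t with 0 < b i, a i ≤ A :=
    Finset.sum_le_sum_of_subset_of_nonneg (Finset.filter_subset _ _) fun i hi _ => ha i hi
  have hne : (t.filter (0 < b ·)).Nonempty := by
    rw [Finset.nonempty_iff_ne_empty]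
    rintro hempty
    rw [hempty, Finset.sum_empty] at hB
    exact h.ne hB
  obtain ⟨i, hi, hle⟩ := Finset.exists_le_of_sum_le hne (f := fun i => a i * B)
    (g := fun i => A * b i) (by
      rw [← Finset.sum_mul, ← Finset.mul_sum, hB]
      exact mul_le_mul_of_nonneg_right hA h.le)
  rw [Finset.mem_filter] at hi
  exact ⟨i, hi.1, hi.2, (div_le_div_iff₀ hi.2 h).2 hle⟩

section Kite

variable {W : Type*} (H : SimpleGraph W) (v : W) {s r : ℕ}

theorem kite_adj_inr_inr {i i' : Fin s} {j j' : Fin r}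
    (h : (kite H v s r).Adj (.inr (i, j)) (.inr (i', j'))) : i = i' := by
  simp only [kite, SimpleGraph.fromRel_adj] at h
  omega

def kitePathIso (σ : Equiv.Perm (Fin s)) : kite H v s r ≃g kite H v s r where
  toEquiv := Equiv.sumCongr (Equiv.refl W) (Equiv.prodCongr σ (Equiv.refl (Fin r)))
  map_rel_iff' := by
    rintro (x | ⟨i, j⟩) (y | ⟨i', j'⟩) <;> simp [kite, σ.injective.eq_iff]

@[simp]
theorem kitePathIso_inl (σ : Equiv.Perm (Fin s)) (w : W) :
    kitePathIso H v (r := r) σ (.inl w) = .inl w := rfl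

@[simp]
theorem kitePathIso_inr (σ : Equiv.Perm (Fin s)) (i : Fin s) (j : Fin r) :
    kitePathIso H v σ (.inr (i, j)) = .inr (σ i, j) := rfl

def onPath (x : W ⊕ Fin s × Fin r → ℝ) (i : Fin s) : Fin r → ℝ := fun j => x (.inr (i, j))

def tailCol (i : Fin s) (g : Fin r → ℝ) : W ⊕ Fin s × Fin r → ℝ :=
  Sum.elim 0 fun p => if p.1 = i then g p.2 else 0

def tailVec (c : Fin s → ℝ) (g : Fin r → ℝ) : W ⊕ Fin s × Fin r → ℝ :=
  Sum.elim 0 fun p => c p.1 * g p.2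

theorem tailCol_comp_kitePathIso (σ : Equiv.Perm (Fin s)) (i : Fin s) (g : Fin r → ℝ) :
    tailCol i g ∘ kitePathIso H v σ = tailCol (σ.symm i) g := by
  ext (w | ⟨k, j⟩) <;> simp [tailCol, ← Equiv.eq_symm_apply]

theorem tailCol_smul (i : Fin s) (a : ℝ) (g : Fin r → ℝ) :
    tailCol (W := W) i (a • g) = a • tailCol i g := by
  ext (w | ⟨k, j⟩) <;> simp [tailCol]

theorem sum_tailCol_onPath {z : W ⊕ Fin s × Fin r → ℝ} (hz : ∀ w, z (.inl w) = 0) :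
    ∑ i, tailCol i (onPath z i) = z := by
  ext (w | ⟨k, j⟩) <;> simp [tailCol, onPath, hz]

theorem onPath_tailVec (c : Fin s → ℝ) (g : Fin r → ℝ) (i : Fin s) :
    onPath (tailVec (W := W) c g) i = c i • g := rfl

theorem onPath_tailCol (i k : Fin s) (g : Fin r → ℝ) :
    onPath (tailCol (W := W) i g) k = if k = i then g else 0 := by
  ext j; simp [onPath, tailCol, apply_ite (fun f : Fin r → ℝ => f j)]

def IsLayerConst (x : W ⊕ Fin s × Fin r → ℝ) : Prop :=
  ∀ i i' j, x (.inr (i, j)) = x (.inr (i', j))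

noncomputable def layerAvg (x : W ⊕ Fin s × Fin r → ℝ) : W ⊕ Fin s × Fin r → ℝ :=
  Sum.elim (x ∘ .inl) fun p => (∑ i, x (.inr (i, p.2))) / s

theorem isLayerConst_layerAvg (x : W ⊕ Fin s × Fin r → ℝ) : IsLayerConst (layerAvg x) :=
  fun _ _ _ => rfl

section Finite

variable [Fintype W]

theorem dotProduct_lapMat_tailCol_eq_zero {i k : Fin s} (hik : i ≠ k) (g h : Fin r → ℝ) :
    tailCol i g ⬝ᵥ (lapMat (kite H v s r) *ᵥ tailCol k h) = 0 := by
  refine dotProduct_lapMat_mulVec_eq_zero _ ?_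
  rintro (w | ⟨i', j⟩) (w' | ⟨k', j'⟩) ha hb <;> simp only [tailCol, Sum.elim_inl, Sum.elim_inr,
    Pi.zero_apply, ne_eq, not_true_eq_false, ite_eq_right_iff, Classical.not_imp] at ha hb
  obtain ⟨rfl, -⟩ := ha
  obtain ⟨rfl, -⟩ := hb
  exact ⟨by simp [hik], fun hadj => hik (kite_adj_inr_inr H v hadj)⟩

theorem dotProduct_lapMat_tailCol_self (i k : Fin s) (g : Fin r → ℝ) :
    tailCol i g ⬝ᵥ (lapMat (kite H v s r) *ᵥ tailCol i g)
      = tailCol k g ⬝ᵥ (lapMat (kite H v s r) *ᵥ tailCol k g) := by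
  rw [← dotProduct_lapMat_mulVec_comp_iso (kitePathIso H v (Equiv.swap i k)),
    tailCol_comp_kitePathIso, Equiv.symm_swap, Equiv.swap_apply_left]

theorem dotProduct_self_of_head_eq_zero {z : W ⊕ Fin s × Fin r → ℝ} (hz : ∀ w, z (.inl w) = 0) :
    z ⬝ᵥ z = ∑ i, onPath z i ⬝ᵥ onPath z i := by
  simp [dotProduct, Fintype.sum_sum_type, hz, Fintype.sum_prod_type, onPath]

theorem dotProduct_lapMat_kite_self_of_head_eq_zero {z : W ⊕ Fin s × Fin r → ℝ}
    (hz : ∀ w, z (.inl w) = 0) :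
    z ⬝ᵥ (lapMat (kite H v s r) *ᵥ z)
      = ∑ i, tailCol i (onPath z i) ⬝ᵥ (lapMat (kite H v s r) *ᵥ tailCol i (onPath z i)) := by
  conv_lhs => rw [← sum_tailCol_onPath hz]
  exact dotProduct_mulVec_sum_self _ _ _ fun i _ k _ hik =>
    dotProduct_lapMat_tailCol_eq_zero H v hik _ _

theorem dotProduct_self_tailVec (c : Fin s → ℝ) (g : Fin r → ℝ) :
    tailVec (W := W) c g ⬝ᵥ tailVec c g = (c ⬝ᵥ c) * (g ⬝ᵥ g) := by
  rw [dotProduct_self_of_head_eq_zero fun _ => rfl, dotProduct, Finset.sum_mul]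
  refine Finset.sum_congr rfl fun i _ => ?_
  rw [onPath_tailVec, smul_dotProduct, dotProduct_smul, smul_eq_mul, smul_eq_mul, mul_assoc]

theorem dotProduct_self_tailCol (i : Fin s) (g : Fin r → ℝ) :
    tailCol (W := W) i g ⬝ᵥ tailCol i g = g ⬝ᵥ g := by
  rw [dotProduct_self_of_head_eq_zero fun _ => rfl,
    Finset.sum_eq_single i (fun k _ hk => by simp [onPath_tailCol, hk]) (by simp), onPath_tailCol,
    if_pos rfl]

theorem dotProduct_lapMat_tailVec_self (c : Fin s → ℝ) (g : Fin r → ℝ) (i : Fin s) :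
    tailVec c g ⬝ᵥ (lapMat (kite H v s r) *ᵥ tailVec c g)
      = (c ⬝ᵥ c) * (tailCol i g ⬝ᵥ (lapMat (kite H v s r) *ᵥ tailCol i g)) := by
  rw [dotProduct_lapMat_kite_self_of_head_eq_zero H v fun _ => rfl, dotProduct, Finset.sum_mul]
  refine Finset.sum_congr rfl fun k _ => ?_
  rw [onPath_tailVec, tailCol_smul, mulVec_smul, smul_dotProduct, dotProduct_smul,
    dotProduct_lapMat_tailCol_self H v k i, smul_eq_mul, smul_eq_mul, mul_assoc]

theorem rayleigh_tailVec {c : Fin s → ℝ} (hc : c ≠ 0) (g : Fin r → ℝ) (i : Fin s) :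
    rayleigh (lapMat (kite H v s r)) (tailVec c g)
      = rayleigh (lapMat (kite H v s r)) (tailCol i g) := by
  rw [rayleigh, rayleigh, dotProduct_lapMat_tailVec_self H v c g i, dotProduct_self_tailVec,
    dotProduct_self_tailCol, mul_div_mul_left _ _ (dotProduct_self_pos hc).ne']

theorem sum_tailVec (c : Fin s → ℝ) (g : Fin r → ℝ) :
    ∑ u, tailVec (W := W) c g u = (∑ i, c i) * ∑ j, g j := by
  simp [tailVec, Fintype.sum_sum_type, Fintype.sum_prod_type, Finset.sum_mul_sum]

theorem tailVec_ne_zero {c : Fin s → ℝ} {g : Fin r → ℝ} (hc : c ≠ 0) (hg : g ≠ 0) :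
    tailVec (W := W) c g ≠ 0 := by
  intro h
  have hN := dotProduct_self_tailVec (W := W) c g
  rw [h, zero_dotProduct] at hN
  exact mul_ne_zero (dotProduct_self_pos hc).ne' (dotProduct_self_pos hg).ne' hN.symm

theorem IsLayerConst.lapMat_mulVec {x : W ⊕ Fin s × Fin r → ℝ} (hx : IsLayerConst x) :
    IsLayerConst (lapMat (kite H v s r) *ᵥ x) := fun i i' j => by
  have hfix : x ∘ kitePathIso H v (Equiv.swap i i') = x := by
    ext (w | ⟨k, j'⟩)
    · rfl
    · exact hx _ _ _
  conv_lhs => rw [← hfix, lapMat_mulVec_comp_iso]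
  simp

theorem exists_rayleigh_tailCol_le {z : W ⊕ Fin s × Fin r → ℝ} (hz : z ≠ 0)
    (hhead : ∀ w, z (.inl w) = 0) :
    ∃ i, onPath z i ≠ 0 ∧ rayleigh (lapMat (kite H v s r)) (tailCol i (onPath z i))
      ≤ rayleigh (lapMat (kite H v s r)) z := by
  have hN := dotProduct_self_of_head_eq_zero hhead
  obtain ⟨i, -, hpos, hle⟩ := Finset.exists_pos_div_le_sum_div (t := Finset.univ)
    (a := fun i => tailCol i (onPath z i) ⬝ᵥ (lapMat (kite H v s r) *ᵥ tailCol i (onPath z i)))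
    (b := fun i => onPath z i ⬝ᵥ onPath z i)
    (fun i _ => dotProduct_lapMat_mulVec_self_nonneg _ _)
    (fun i _ => Finset.sum_nonneg fun _ _ => mul_self_nonneg _)
    (hN ▸ dotProduct_self_pos hz)
  refine ⟨i, fun h => by simp [h] at hpos, ?_⟩
  rwa [rayleigh, rayleigh, dotProduct_self_tailCol, hN,
    dotProduct_lapMat_kite_self_of_head_eq_zero H v hhead]

end Finite

section NonemptyTail

variable [NeZero s]

def tailWeight (s : ℕ) [NeZero s] : Fin s → ℝ := fun i => if i = 0 then (s : ℝ) - 1 else -1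

theorem sum_tailWeight : ∑ i, tailWeight s i = 0 := by
  have h : ∀ i : Fin s, tailWeight s i = (if i = 0 then (s : ℝ) else 0) - 1 := fun i => by
    unfold tailWeight; split_ifs <;> ring
  simp [h, Finset.sum_sub_distrib]

theorem tailWeight_ne_zero (hs : 2 ≤ s) : tailWeight s ≠ 0 := fun h => by
  have h0 : (s : ℝ) - 1 = 0 := by simpa [tailWeight] using congrFun h 0
  have : (2 : ℝ) ≤ s := by exact_mod_cast hs
  linarith

theorem tailVec_tailWeight_eq_sum (g : Fin r → ℝ) :
    tailVec (W := W) (tailWeight s) g = ∑ k ∈ Finset.univ.erase 0, (tailCol 0 g - tailCol k g) := by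
  ext (w | ⟨i, j⟩)
  · simp [tailVec, tailCol]
  · by_cases hi : i = 0
    · simp [tailVec, tailCol, tailWeight, hi, Finset.card_erase_of_mem, Nat.cast_sub NeZero.one_le]
    · simp [tailVec, tailCol, tailWeight, hi, Finset.sum_ite_eq]

/-- Paths are indexed from `0`, so `U_j = {v_{2j}, …, v_{sj}}` consists of the `Sum.inr (i, j)`
with `i ≠ 0`. -/
def IsConstOnU (x : W ⊕ Fin s × Fin r → ℝ) : Prop :=
  ∀ i i' j, i ≠ 0 → i' ≠ 0 → x (.inr (i, j)) = x (.inr (i', j))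

theorem IsLayerConst.isConstOnU {x : W ⊕ Fin s × Fin r → ℝ} (hx : IsLayerConst x) :
    IsConstOnU x := fun i i' j _ _ => hx i i' j

theorem isConstOnU_tailVec_tailWeight (g : Fin r → ℝ) :
    IsConstOnU (tailVec (W := W) (tailWeight s) g) := fun i i' j hi hi' => by
  simp [tailVec, tailWeight, hi, hi']

theorem sum_sub_layerAvg_inr (x : W ⊕ Fin s × Fin r → ℝ) (j : Fin r) :
    ∑ i, (x - layerAvg x) (.inr (i, j)) = 0 := by
  have hs : (s : ℝ) ≠ 0 := NeZero.ne _
  simp [layerAvg, Finset.sum_sub_distrib, mul_div_cancel₀ _ hs]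

variable [Fintype W]

theorem sum_layerAvg (x : W ⊕ Fin s × Fin r → ℝ) : ∑ u, layerAvg x u = ∑ u, x u := by
  have hs : (s : ℝ) ≠ 0 := NeZero.ne _
  simp [layerAvg, Fintype.sum_sum_type, Fintype.sum_prod_type_right, mul_div_cancel₀ _ hs]

theorem IsLayerConst.dotProduct_eq_zero {p z : W ⊕ Fin s × Fin r → ℝ} (hp : IsLayerConst p)
    (hz : ∀ w, z (.inl w) = 0) (hzs : ∀ j, ∑ i, z (.inr (i, j)) = 0) : p ⬝ᵥ z = 0 := by
  simp only [dotProduct, Fintype.sum_sum_type, hz, mul_zero, Finset.sum_const_zero, zero_add,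
    Fintype.sum_prod_type_right]
  refine Finset.sum_eq_zero fun j _ => ?_
  simp_rw [hp _ 0 j, ← Finset.mul_sum, hzs, mul_zero]

theorem exists_isConstOnU_mem_eigenspace (hs : 2 ≤ s) {μ : ℝ} {x : W ⊕ Fin s × Fin r → ℝ}
    (hx0 : x ≠ 0) (hx : x ∈ Module.End.eigenspace (toLin' (lapMat (kite H v s r))) μ) :
    ∃ y, y ≠ 0 ∧ IsConstOnU y ∧ y ∈ Module.End.eigenspace (toLin' (lapMat (kite H v s r))) μ := by
  by_cases hsym : ∀ b, onPath x b = onPath x 0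
  · refine ⟨x, hx0, fun i i' j _ _ => ?_, hx⟩
    exact (congrFun (hsym i) j).trans (congrFun (hsym i') j).symm
  obtain ⟨b, hb⟩ := not_forall.mp hsym
  have hb0 : b ≠ 0 := by rintro rfl; exact hb rfl
  set g := onPath x 0 - onPath x b
  have hd :
      tailCol 0 g - tailCol b g ∈ Module.End.eigenspace (toLin' (lapMat (kite H v s r))) μ := by
    have : tailCol 0 g - tailCol b g = x - x ∘ kitePathIso H v (Equiv.swap 0 b) := by
      ext (w | ⟨i, j⟩)
      · simp [tailCol]
      · simp only [tailCol, g, onPath, Pi.sub_apply, Sum.elim_inr, Function.comp_apply,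
          kitePathIso_inr, Equiv.swap_apply_def]
        split_ifs <;> simp_all
    rw [this]
    exact sub_mem hx (comp_mem_eigenspace_lapMat _ hx)
  refine ⟨tailVec (tailWeight s) g,
    tailVec_ne_zero (tailWeight_ne_zero hs) (sub_ne_zero.2 (Ne.symm hb)),
    isConstOnU_tailVec_tailWeight g, ?_⟩
  rw [tailVec_tailWeight_eq_sum]
  refine Submodule.sum_mem _ fun k hk => ?_
  have hk0 : k ≠ 0 := Finset.ne_of_mem_erase hk
  have := comp_mem_eigenspace_lapMat (kitePathIso H v (Equiv.swap b k)) hd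
  rwa [Pi.sub_comp, tailCol_comp_kitePathIso, tailCol_comp_kitePathIso, Equiv.symm_swap,
    Equiv.swap_apply_of_ne_of_ne hb0.symm hk0.symm, Equiv.swap_apply_left] at this

theorem exists_isConstOnU_rayleigh_le_of_head_eq_zero (hs : 2 ≤ s) {z : W ⊕ Fin s × Fin r → ℝ}
    (hz : z ≠ 0) (hhead : ∀ w, z (.inl w) = 0) :
    ∃ y, y ≠ 0 ∧ ∑ u, y u = 0 ∧ IsConstOnU y ∧
      rayleigh (lapMat (kite H v s r)) y ≤ rayleigh (lapMat (kite H v s r)) z := by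
  obtain ⟨i, hg, hle⟩ := exists_rayleigh_tailCol_le H v hz hhead
  refine ⟨tailVec (tailWeight s) (onPath z i), tailVec_ne_zero (tailWeight_ne_zero hs) hg,
    by rw [sum_tailVec, sum_tailWeight, zero_mul], isConstOnU_tailVec_tailWeight _, ?_⟩
  rwa [rayleigh_tailVec H v (tailWeight_ne_zero hs) _ i]

theorem exists_isConstOnU_rayleigh_le (hs : 2 ≤ s) {x : W ⊕ Fin s × Fin r → ℝ} (hx : x ≠ 0)
    (hsum : ∑ u, x u = 0) :
    ∃ y, y ≠ 0 ∧ ∑ u, y u = 0 ∧ IsConstOnU y ∧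
      rayleigh (lapMat (kite H v s r)) y ≤ rayleigh (lapMat (kite H v s r)) x := by
  set p := layerAvg x
  set z := x - layerAvg x
  have hp : IsLayerConst p := isLayerConst_layerAvg x
  have hhead : ∀ w, z (.inl w) = 0 := fun w => sub_self _
  have horth : ∀ q, IsLayerConst q → q ⬝ᵥ z = 0 := fun q hq =>
    hq.dotProduct_eq_zero hhead (sum_sub_layerAvg_inr x)
  have hxpz : x = p + z := (add_sub_cancel _ _).symm
  have hN : x ⬝ᵥ x = p ⬝ᵥ p + z ⬝ᵥ z := by
    rw [hxpz, add_dotProduct, dotProduct_add, dotProduct_add, horth p hp, dotProduct_comm z p,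
      horth p hp, add_zero, zero_add]
  have hQ : x ⬝ᵥ (lapMat (kite H v s r) *ᵥ x)
      = p ⬝ᵥ (lapMat (kite H v s r) *ᵥ p) + z ⬝ᵥ (lapMat (kite H v s r) *ᵥ z) := by
    rw [hxpz, mulVec_add, add_dotProduct, dotProduct_add, dotProduct_add,
      dotProduct_lapMat_mulVec_comm _ p z, horth _ (hp.lapMat_mulVec H v), dotProduct_comm z,
      horth _ (hp.lapMat_mulVec H v), add_zero, zero_add]
  rcases eq_or_ne z 0 with hz0 | hz0
  · rw [hxpz, hz0, add_zero] at hx hsum ⊢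
    exact ⟨p, hx, hsum, hp.isConstOnU, le_rfl⟩
  rcases eq_or_ne p 0 with hp0 | hp0
  · rw [hxpz, hp0, zero_add]
    exact exists_isConstOnU_rayleigh_le_of_head_eq_zero H v hs hz0 hhead
  have hmin := min_div_le_add_div_add (p ⬝ᵥ (lapMat (kite H v s r) *ᵥ p))
    (z ⬝ᵥ (lapMat (kite H v s r) *ᵥ z)) (dotProduct_self_pos hp0) (dotProduct_self_pos hz0)
  rw [← hQ, ← hN] at hmin
  rcases min_le_iff.mp hmin with h | h
  · exact ⟨p, hp0, (sum_layerAvg x).trans hsum, hp.isConstOnU, h⟩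
  · obtain ⟨y, hy0, hys, hyU, hle⟩ := exists_isConstOnU_rayleigh_le_of_head_eq_zero H v hs hz0 hhead
    exact ⟨y, hy0, hys, hyU, hle.trans h⟩

end NonemptyTail

end Kite

theorem stmt11_general {W : Type*} [Fintype W] (H : SimpleGraph W)
    (v : W) (s r : ℕ) (hs : 2 ≤ s)
    (Gp : SimpleGraph (W ⊕ Fin s × Fin r)) (hle : kite H v s r ≤ Gp)
    (hadd : ∀ a b, Gp.Adj a b → (kite H v s r).Adj a b ∨
      ∃ j : Fin r, ∃ i i' : Fin s, i.val ≠ 0 ∧ i'.val ≠ 0 ∧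
        a = Sum.inr (i, j) ∧ b = Sum.inr (i', j)) :
    (∀ lam : ℝ,
      (∃ x : (W ⊕ Fin s × Fin r) → ℝ, x ≠ 0 ∧ lapMat (kite H v s r) *ᵥ x = lam • x) →
      (∃ y : (W ⊕ Fin s × Fin r) → ℝ, y ≠ 0 ∧ lapMat Gp *ᵥ y = lam • y)) ∧
    algConn Gp = algConn (kite H v s r) := by
  have : NeZero s := ⟨by omega⟩
  have hGp : ∀ y, IsConstOnU y → lapMat Gp *ᵥ y = lapMat (kite H v s r) *ᵥ y := fun y hy =>
    lapMat_mulVec_eq_of_le hle fun a b hab hnot => by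
      obtain ⟨j, i, i', hi, hi', rfl, rfl⟩ := (hadd a b hab).resolve_left hnot
      exact hy i i' j (Fin.val_ne_zero_iff.mp hi) (Fin.val_ne_zero_iff.mp hi')
  refine ⟨fun μ ⟨x, hx0, hx⟩ => ?_, le_antisymm ?_ ?_⟩
  · obtain ⟨y, hy0, hyU, hy⟩ := exists_isConstOnU_mem_eigenspace H v hs hx0
      (Module.End.mem_eigenspace_iff.mpr hx)
    exact ⟨y, hy0, (hGp y hyU).trans (Module.End.mem_eigenspace_iff.mp hy)⟩
  · refine algConn_le_of_forall_exists fun x hx hsum => ?_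
    obtain ⟨y, hy0, hys, hyU, hyx⟩ := exists_isConstOnU_rayleigh_le H v hs hx hsum
    exact ⟨y, hy0, hys, by rwa [rayleigh, hGp y hyU]⟩
  · exact algConn_le_of_forall_exists fun x hx hsum => ⟨x, hx, hsum,
      div_le_div_of_nonneg_right (dotProduct_lapMat_mulVec_self_mono hle x)
        (dotProduct_self_pos hx).le⟩

/-- Let `G = K(H,T)` be a kite graph and let `G⁺` be obtained from `G` by
adding some edges among the vertices of each set `U_j = {v_{2j}, …, v_{sj}}` (`1 ≤ j ≤ r`).
Then every eigenvalue of `L(G)` is also an eigenvalue of `L(G⁺)`; in particular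
`α(G⁺) = α(G)`. -/
theorem stmt11 {W : Type*} [Fintype W] [DecidableEq W] (H : SimpleGraph W)
    (hH : H.Connected) (v : W) (s r : ℕ) (hs : 2 ≤ s) (hr : 1 ≤ r)
    (Gp : SimpleGraph (W ⊕ Fin s × Fin r)) (hle : kite H v s r ≤ Gp)
    (hadd : ∀ a b, Gp.Adj a b → (kite H v s r).Adj a b ∨
      ∃ j : Fin r, ∃ i i' : Fin s, i.val ≠ 0 ∧ i'.val ≠ 0 ∧
        a = Sum.inr (i, j) ∧ b = Sum.inr (i', j)) :
    (∀ lam : ℝ,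
      (∃ x : (W ⊕ Fin s × Fin r) → ℝ, x ≠ 0 ∧ lapMat (kite H v s r) *ᵥ x = lam • x) →
      (∃ y : (W ⊕ Fin s × Fin r) → ℝ, y ≠ 0 ∧ lapMat Gp *ᵥ y = lam • y)) ∧
    algConn Gp = algConn (kite H v s r) :=
  stmt11_general H v s r hs Gp hle hadd
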